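/- For every T > 0 there exists a constant C_T > 0 such that for all t ∈ (0, T] and all y ∈ ℝ: |∂_y p_𝕋(t, y)| ≤ (C_T / t) · p_𝕋(t, y). In particular, the sup-norm of ∂_y p_𝕋(t,·)/p_𝕋(t,·) is at most C_T/t. -/

import Mathlib

open Real

noncomputable def heatKernelTorus (s y : ℝ) : ℝ :=
  2 * π * ∑' k : ℤ, (Real.sqrt (2 * π * s))⁻¹ * Real.exp (-(y + 2 * π * k) ^ 2 / (2 * s))

/-!
Write `p_𝕋(t, y) = 2π (2πt)^{-1/2} ∑ₖ g(y + 2πk)` with `g(x) = exp(-x²/(2t))`; by periodicity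
we may take `|y| ≤ π`. Then `(y + 2πk)² - y² ≥ 4π²(k² - |k|) ≥ 0`, so
`g(y + 2πk) ≤ g(y) exp(-2π²(k² - |k|)/T)` for `t ≤ T`. Hence the termwise derivative
`∑ₖ |y + 2πk| g(y + 2πk) / t` is at most `g(y) / t` times a convergent series independent
of `t`, and `g(y)` is controlled by the `k = 0` term of the kernel itself.
-/

lemma heatKernelTorus_eq (s y : ℝ) :
    heatKernelTorus s y =
      2 * π * (√(2 * π * s))⁻¹ * ∑' k : ℤ, rexp (-(y + 2 * π * k) ^ 2 / (2 * s)) := by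
  rw [heatKernelTorus, tsum_mul_left, ← mul_assoc]

lemma heatKernelTorus_periodic (s : ℝ) : Function.Periodic (heatKernelTorus s) (2 * π) := by
  intro y
  simp only [heatKernelTorus_eq]
  congr 1
  rw [← (Equiv.addRight (1 : ℤ)).tsum_eq fun k : ℤ => rexp (-(y + 2 * π * k) ^ 2 / (2 * s))]
  refine tsum_congr fun k => ?_
  simp only [Equiv.coe_addRight]
  push_cast
  ring_nf

lemma deriv_heatKernelTorus_periodic (s : ℝ) :
    Function.Periodic (deriv (heatKernelTorus s)) (2 * π) := fun y => by
  rw [← deriv_comp_add_const, funext (heatKernelTorus_periodic s)]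

/-- `exp(-π(T k² - 2S|k|))` is Mathlib's majorant for the terms of the Jacobi theta function. -/
lemma summable_affine_mul_exp_neg_pi_mul (b c S : ℝ) {T : ℝ} (hT : 0 < T) :
    Summable fun k : ℤ => (b + c * |k|) * rexp (-π * (T * k ^ 2 - 2 * S * |k|)) := by
  simpa [add_mul, mul_assoc, Int.cast_abs] using
    ((summable_pow_mul_jacobiTheta₂_term_bound S hT 0).mul_left b).add
      ((summable_pow_mul_jacobiTheta₂_term_bound S hT 1).mul_left c)

noncomputable def heatKernelTorusGradientConst (T : ℝ) : ℝ :=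
  ∑' k : ℤ, (π + 2 * π * |k|) * rexp (-π * (2 * π / T * k ^ 2 - 2 * (π / T) * |k|))

section

variable {t T a y : ℝ}

lemma exp_neg_sq_add_two_pi_mul_le (ht : 0 < t) (hy : |y| ≤ a) (k : ℤ) :
    rexp (-(y + 2 * π * k) ^ 2 / (2 * t)) ≤
      rexp (-y ^ 2 / (2 * t)) * rexp (-π * (2 * π / t * k ^ 2 - 2 * (a / t) * |k|)) := by
  have hky : -(|k| * a) ≤ k * y := by
    refine le_trans ?_ (neg_abs_le _)
    rw [abs_mul, Int.cast_abs, neg_le_neg_iff]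
    exact mul_le_mul_of_nonneg_left hy (abs_nonneg _)
  rw [← exp_add, exp_le_exp]
  field_simp
  nlinarith [pi_pos]

lemma abs_add_two_pi_mul_le (hy : |y| ≤ a) (k : ℤ) : |y + 2 * π * k| ≤ a + 2 * π * |k| := by
  grw [abs_add_le, hy, abs_mul, abs_of_pos two_pi_pos, Int.cast_abs]

lemma norm_exp_neg_sq_mul_le (ht : 0 < t) (hy : |y| ≤ a) (k : ℤ) :
    ‖rexp (-(y + 2 * π * k) ^ 2 / (2 * t)) * (-(y + 2 * π * k) / t)‖ ≤
      rexp (-y ^ 2 / (2 * t)) / t *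
        ((a + 2 * π * |k|) * rexp (-π * (2 * π / t * k ^ 2 - 2 * (a / t) * |k|))) := by
  rw [norm_mul, norm_div, norm_neg, Real.norm_of_nonneg (exp_pos _).le, Real.norm_eq_abs,
    Real.norm_of_nonneg ht.le]
  calc rexp (-(y + 2 * π * k) ^ 2 / (2 * t)) * (|y + 2 * π * k| / t)
      ≤ rexp (-y ^ 2 / (2 * t)) * rexp (-π * (2 * π / t * k ^ 2 - 2 * (a / t) * |k|)) *
          ((a + 2 * π * |k|) / t) := by
        gcongr
        exacts [exp_neg_sq_add_two_pi_mul_le ht hy k, abs_add_two_pi_mul_le hy k]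
    _ = _ := by ring

lemma summable_exp_neg_sq_add_two_pi_mul (ht : 0 < t) (y : ℝ) :
    Summable fun k : ℤ => rexp (-(y + 2 * π * k) ^ 2 / (2 * t)) := by
  refine .of_nonneg_of_le (fun k => (exp_pos _).le)
    (exp_neg_sq_add_two_pi_mul_le ht le_rfl) (Summable.mul_left _ ?_)
  simpa using summable_affine_mul_exp_neg_pi_mul 1 0 (|y| / t) (by positivity : 0 < 2 * π / t)

lemma hasDerivAt_heatKernelTorus (ht : 0 < t) (y : ℝ) :
    HasDerivAt (heatKernelTorus t) (2 * π * (√(2 * π * t))⁻¹ *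
      ∑' k : ℤ, rexp (-(y + 2 * π * k) ^ 2 / (2 * t)) * (-(y + 2 * π * k) / t)) y := by
  have hterm (k : ℤ) (z : ℝ) : HasDerivAt (fun z => rexp (-(z + 2 * π * k) ^ 2 / (2 * t)))
      (rexp (-(z + 2 * π * k) ^ 2 / (2 * t)) * (-(z + 2 * π * k) / t)) z := by
    refine HasDerivAt.exp ((((hasDerivAt_id' z).add_const _).fun_pow 2).neg.div_const (2 * t)
      |>.congr_deriv ?_)
    field_simp
    ring
  have hnear : ∀ z ∈ Metric.ball y 1, |z| ≤ |y| + 1 := fun z hz => by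
    rw [Metric.mem_ball, Real.dist_eq] at hz
    linarith [abs_sub_abs_le_abs_sub z y]
  have hseries := hasDerivAt_tsum_of_isPreconnected
    ((summable_affine_mul_exp_neg_pi_mul (|y| + 1) (2 * π) ((|y| + 1) / t)
      (by positivity : 0 < 2 * π / t)).mul_left t⁻¹)
    Metric.isOpen_ball (convex_ball _ _).isPreconnected (fun k z _ => hterm k z)
    (fun k z hz => (norm_exp_neg_sq_mul_le ht (hnear z hz) k).trans ?_)
    (Metric.mem_ball_self one_pos) (summable_exp_neg_sq_add_two_pi_mul ht y)
    (Metric.mem_ball_self one_pos)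
  · rw [funext (heatKernelTorus_eq t)]
    exact hseries.const_mul _
  · rw [← one_div]
    gcongr
    exact exp_le_one_iff.2 <|
      div_nonpos_of_nonpos_of_nonneg (neg_nonpos.2 (sq_nonneg z)) (by positivity)

lemma le_heatKernelTorus (ht : 0 < t) (y : ℝ) :
    2 * π * (√(2 * π * t))⁻¹ * rexp (-y ^ 2 / (2 * t)) ≤ heatKernelTorus t y := by
  rw [heatKernelTorus_eq]
  gcongr
  simpa using (summable_exp_neg_sq_add_two_pi_mul ht y).le_tsum 0 fun k _ => (exp_pos _).le

lemma exp_neg_pi_mul_le_of_le (ht : 0 < t) (htT : t ≤ T) (k : ℤ) :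
    rexp (-π * (2 * π / t * k ^ 2 - 2 * (π / t) * |k|)) ≤
      rexp (-π * (2 * π / T * k ^ 2 - 2 * (π / T) * |k|)) := by
  have hk : ((|k| : ℤ) : ℝ) ≤ (k : ℝ) ^ 2 := by
    exact_mod_cast Int.natCast_natAbs k ▸ Int.natAbs_le_self_sq k
  have hform (s : ℝ) : -π * (2 * π / s * k ^ 2 - 2 * (π / s) * |k|) =
      -(2 * π ^ 2 * (k ^ 2 - |k|) / s) := by ring
  rw [exp_le_exp, hform, hform, neg_le_neg_iff]
  have : 0 ≤ 2 * π ^ 2 * ((k : ℝ) ^ 2 - |k|) := by nlinarith [pi_pos]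
  gcongr

lemma heatKernelTorusGradientConst_pos (hT : 0 < T) :
    0 < heatKernelTorusGradientConst T :=
  (summable_affine_mul_exp_neg_pi_mul π (2 * π) (π / T) (by positivity)).tsum_pos
    (fun k => by positivity) 0 (by simp [pi_pos])

lemma abs_deriv_heatKernelTorus_le (ht : t ∈ Set.Ioc 0 T) (hy : |y| ≤ π) :
    |deriv (heatKernelTorus t) y| ≤ heatKernelTorusGradientConst T / t * heatKernelTorus t y := by
  obtain ⟨ht, htT⟩ := ht
  have hc : 0 < 2 * π * (√(2 * π * t))⁻¹ := by positivity
  set c := 2 * π * (√(2 * π * t))⁻¹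
  have hT : 0 < T := ht.trans_le htT
  have hG := summable_affine_mul_exp_neg_pi_mul π (2 * π) (π / T) (by positivity : 0 < 2 * π / T)
  have hterm (k : ℤ) :
      ‖rexp (-(y + 2 * π * k) ^ 2 / (2 * t)) * (-(y + 2 * π * k) / t)‖ ≤
        rexp (-y ^ 2 / (2 * t)) / t *
          ((π + 2 * π * |k|) * rexp (-π * (2 * π / T * k ^ 2 - 2 * (π / T) * |k|))) :=
    (norm_exp_neg_sq_mul_le ht hy k).trans <| by
      gcongr _ * (_ * ?_)
      exact exp_neg_pi_mul_le_of_le ht htT k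
  rw [(hasDerivAt_heatKernelTorus ht y).deriv, abs_mul, abs_of_pos hc]
  calc c * |∑' k : ℤ, rexp (-(y + 2 * π * k) ^ 2 / (2 * t)) * (-(y + 2 * π * k) / t)|
      ≤ c * ∑' k : ℤ, rexp (-y ^ 2 / (2 * t)) / t *
          ((π + 2 * π * |k|) * rexp (-π * (2 * π / T * k ^ 2 - 2 * (π / T) * |k|))) := by
        gcongr
        exact tsum_of_norm_bounded (hG.mul_left _).hasSum hterm
    _ = heatKernelTorusGradientConst T / t * (c * rexp (-y ^ 2 / (2 * t))) := by
        rw [tsum_mul_left, heatKernelTorusGradientConst]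
        ring
    _ ≤ heatKernelTorusGradientConst T / t * heatKernelTorus t y := by
        gcongr
        · exact div_nonneg (heatKernelTorusGradientConst_pos hT).le ht.le
        · exact le_heatKernelTorus ht y

end

/-- **Gradient estimate for the periodic heat kernel:** for every `T > 0` there is
`C_T > 0` such that `|∂_y p_𝕋(t,y)| ≤ (C_T/t) p_𝕋(t,y)` for all `t ∈ (0,T]`, `y ∈ ℝ`. -/
theorem heatKernelTorus_gradient_estimate (T : ℝ) (hT : 0 < T) :
    ∃ C : ℝ, 0 < C ∧ ∀ t : ℝ, t ∈ Set.Ioc 0 T → ∀ y : ℝ,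
      |deriv (fun z => heatKernelTorus t z) y| ≤ (C / t) * heatKernelTorus t y := by
  refine ⟨heatKernelTorusGradientConst T, heatKernelTorusGradientConst_pos hT, fun t ht y => ?_⟩
  have hper : Function.Periodic (fun z => |deriv (heatKernelTorus t) z| ≤
      heatKernelTorusGradientConst T / t * heatKernelTorus t z) (2 * π) := fun z => by
    simp only [heatKernelTorus_periodic t z, deriv_heatKernelTorus_periodic t z]
  obtain ⟨y₀, ⟨hy₀, hy₀'⟩, hyy₀⟩ := hper.exists_mem_Ico two_pi_pos y (-π)
  have hy₀π : |y₀| ≤ π := abs_le.2 ⟨hy₀, by linarith⟩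
  exact hyy₀ ▸ abs_deriv_heatKernelTorus_le ht hy₀π
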